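/- arXiv:2110.04679 — 3 statements merged into one kernel-verified Lean document; each statement's English description precedes it below -/
import Mathlib

section
/- Let F : C → D be a strongly κ-accessible functor between κ-accessible categories. If the restriction of F to the full subcategories of κ-presentable objects is an equivalence of categories, then F itself is an equivalence of categories. -/
/-!
Write each object as a `κ`-filtered colimit of `κ`-presentable objects. For presentable `A`,
`Hom(A, -)` commutes with these colimits in `C`, and `Hom(F A, -)` with their images under `F`
in `D`, so bijectivity of `F` on maps between presentables extends to maps `A ⟶ Y`; since
`Hom(-, Y)` turns colimits into limits, it then extends to all maps. For essential surjectivity,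
lift a presentation of an object of `D` through the inverse of the restricted equivalence and
take its colimit in `C`, which `F` preserves.
-/

open CategoryTheory CategoryTheory.Limits Opposite

universe v u

/-- A small category is `κ`-small if it has fewer than `κ` morphisms. -/
def CardSmallCat (κ : Cardinal.{v}) (K : Type v) [SmallCategory K] : Prop :=
  Cardinal.mk (Σ X Y : K, X ⟶ Y) < κ

/-- A small category `J` is `κ`-filtered if every `κ`-small diagram in `J` admits a cocone. -/
def IsCardFiltered (κ : Cardinal.{v}) (J : Type v) [SmallCategory J] : Prop :=
  ∀ (K : Type v) (_ : SmallCategory K), CardSmallCat κ K →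
    ∀ F : K ⥤ J, Nonempty (Cocone F)

/-- An object `A` is `κ`-presentable if `Hom(A, -)` preserves all small `κ`-filtered colimits. -/
def IsPresentableObj (κ : Cardinal.{v}) {C : Type u} [Category.{v} C] (A : C) : Prop :=
  ∀ (J : Type v) (_ : SmallCategory J), IsCardFiltered κ J →
    PreservesColimitsOfShape J (coyoneda.obj (op A))

/-- A category is `κ`-accessible: it has `κ`-filtered colimits and every object is a
`κ`-filtered colimit of `κ`-presentable objects. -/
structure IsAccessibleCat (κ : Cardinal.{v}) (C : Type u) [Category.{v} C] : Prop where
  hasFilteredColimits : ∀ (J : Type v) (_ : SmallCategory J), IsCardFiltered κ J →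
    HasColimitsOfShape J C
  gen : ∀ X : C, ∃ (J : Type v) (_ : SmallCategory J) (F : J ⥤ C) (c : Cocone F),
    IsCardFiltered κ J ∧ (∀ j : J, IsPresentableObj κ (F.obj j)) ∧
      Nonempty (IsColimit c) ∧ c.pt = X

/-- A functor between `κ`-accessible categories is strongly `κ`-accessible if it preserves
`κ`-filtered colimits and `κ`-presentable objects. -/
structure IsStronglyAccessible (κ : Cardinal.{v}) {C : Type u} {D : Type u} [Category.{v} C]
    [Category.{v} D] (F : C ⥤ D) : Prop where
  preservesFiltered : ∀ (J : Type v) (_ : SmallCategory J), IsCardFiltered κ J →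
    PreservesColimitsOfShape J F
  preservesPresentable : ∀ A : C, IsPresentableObj κ A → IsPresentableObj κ (F.obj A)

/-- A category is locally `κ`-presentable if it is `κ`-accessible and cocomplete. -/
def IsLocallyPresentableCat (κ : Cardinal.{v}) (C : Type u) [Category.{v} C] : Prop :=
  IsAccessibleCat κ C ∧ HasColimits C


/-- The restriction of a strongly `κ`-accessible functor `F` to the full subcategories
of `κ`-presentable objects. -/
def restrictToPresentables (κ : Cardinal.{v}) {C D : Type u} [Category.{v} C]
    [Category.{v} D] (F : C ⥤ D) (hF : IsStronglyAccessible κ F) :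
    ObjectProperty.FullSubcategory (IsPresentableObj κ (C := C)) ⥤
      ObjectProperty.FullSubcategory (IsPresentableObj κ (C := D)) :=
  ObjectProperty.lift _ (ObjectProperty.ι _ ⋙ F)
    (fun X => hF.preservesPresentable X.obj X.property)

namespace CategoryTheory.Functor

variable {C D : Type u} [Category.{v} C] [Category.{v} D] (F : C ⥤ D)

section Colimits

variable {J : Type v} [SmallCategory J] {G : J ⥤ C} (c : Cocone G)

lemma map_bijective_to_coconePt (X : C)
    (hX : IsColimit ((coyoneda.obj (op X)).mapCocone c))
    (hFX : IsColimit ((coyoneda.obj (op (F.obj X))).mapCocone (F.mapCocone c)))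
    (h : ∀ j, Function.Bijective (F.map : (X ⟶ G.obj j) → (F.obj X ⟶ F.obj (G.obj j)))) :
    Function.Bijective (F.map : (X ⟶ c.pt) → (F.obj X ⟶ F.obj c.pt)) := by
  let α : G ⋙ coyoneda.obj (op X) ≅ (G ⋙ F) ⋙ coyoneda.obj (op (F.obj X)) :=
    NatIso.ofComponents (fun j => (Equiv.ofBijective _ (h j)).toIso)
      (fun _ => by ext; simp [Equiv.ofBijective])
  let e := IsColimit.coconePointsIsoOfNatIso hX hFX α
  suffices he : TypeCat.ofHom F.map = e.hom from
    (isIso_iff_bijective (TypeCat.ofHom F.map)).mp (he ▸ inferInstance)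
  refine hX.hom_ext fun j => ?_
  rw [IsColimit.comp_coconePointsIsoOfNatIso_hom]
  ext f
  exact F.map_comp f (c.ι.app j)

lemma map_bijective_from_coconePt (hc : IsColimit c) (hFc : IsColimit (F.mapCocone c)) (Y : C)
    (h : ∀ j, Function.Bijective (F.map : (G.obj j ⟶ Y) → (F.obj (G.obj j) ⟶ F.obj Y))) :
    Function.Bijective (F.map : (c.pt ⟶ Y) → (F.obj c.pt ⟶ F.obj Y)) := by
  refine ⟨fun f g hfg => hc.hom_ext fun j => (h j).1 (by simp [hfg]), fun g => ?_⟩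
  choose f hf using fun j => (h j).2 (F.map (c.ι.app j) ≫ g)
  have hf_compat : ∀ {j j'} (u : j ⟶ j'), G.map u ≫ f j' = f j := fun u =>
    (h _).1 (by rw [F.map_comp, hf, hf, ← F.map_comp_assoc, c.w])
  let d : Cocone G := ⟨Y, ⟨f, fun _ _ u => by simp [hf_compat u]⟩⟩
  refine ⟨hc.desc d, hFc.hom_ext fun j => ?_⟩
  simpa [← F.map_comp] using hf j

end Colimits

variable {F} {κ : Cardinal.{v}}

lemma map_bijective_of_fullyFaithful_restrictToPresentables {hF : IsStronglyAccessible κ F}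
    (hres : (restrictToPresentables κ F hF).FullyFaithful)
    {A B : C} (hA : IsPresentableObj κ A) (hB : IsPresentableObj κ B) :
    Function.Bijective (F.map : (A ⟶ B) → (F.obj A ⟶ F.obj B)) :=
  ((hres.comp (ObjectProperty.fullyFaithfulι _)).map_bijective ⟨A, hA⟩ ⟨B, hB⟩).comp
    ⟨fun _ _ h => congrArg (·.hom) h, ObjectProperty.homMk_surjective⟩

lemma map_bijective_of_isPresentableObj_left (hC : IsAccessibleCat κ C)
    (hF : IsStronglyAccessible κ F)
    (hbij : ∀ {A B : C}, IsPresentableObj κ A → IsPresentableObj κ B →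
      Function.Bijective (F.map : (A ⟶ B) → (F.obj A ⟶ F.obj B)))
    {X : C} (hX : IsPresentableObj κ X) (Y : C) :
    Function.Bijective (F.map : (X ⟶ Y) → (F.obj X ⟶ F.obj Y)) := by
  obtain ⟨J, _, G, c, hJ, hG, ⟨hc⟩, rfl⟩ := hC.gen Y
  have := hX J _ hJ
  have := hF.preservesPresentable X hX J _ hJ
  have := hF.preservesFiltered J _ hJ
  exact F.map_bijective_to_coconePt c X (isColimitOfPreserves _ hc)
    (isColimitOfPreserves _ (isColimitOfPreserves F hc)) fun j => hbij hX (hG j)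

lemma map_bijective_of_bijective_on_presentables (hC : IsAccessibleCat κ C)
    (hF : IsStronglyAccessible κ F)
    (hbij : ∀ {A B : C}, IsPresentableObj κ A → IsPresentableObj κ B →
      Function.Bijective (F.map : (A ⟶ B) → (F.obj A ⟶ F.obj B)))
    (X Y : C) :
    Function.Bijective (F.map : (X ⟶ Y) → (F.obj X ⟶ F.obj Y)) := by
  obtain ⟨J, _, G, c, hJ, hG, ⟨hc⟩, rfl⟩ := hC.gen X
  have := hF.preservesFiltered J _ hJ
  exact F.map_bijective_from_coconePt c hc (isColimitOfPreserves F hc) Y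
    fun j => map_bijective_of_isPresentableObj_left hC hF hbij (hG j) Y

lemma nonempty_fullyFaithful_of_restrictToPresentables (hC : IsAccessibleCat κ C)
    {hF : IsStronglyAccessible κ F} (hres : (restrictToPresentables κ F hF).FullyFaithful) :
    Nonempty F.FullyFaithful :=
  (FullyFaithful.nonempty_iff_map_bijective F).mpr <|
    map_bijective_of_bijective_on_presentables hC hF
      (map_bijective_of_fullyFaithful_restrictToPresentables hres)

lemma essSurj_of_restrictToPresentables (hC : IsAccessibleCat κ C) (hD : IsAccessibleCat κ D)
    {hF : IsStronglyAccessible κ F} [(restrictToPresentables κ F hF).IsEquivalence] :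
    F.EssSurj where
  mem_essImage Y := by
    obtain ⟨J, _, G, c, hJ, hG, ⟨hc⟩, rfl⟩ := hD.gen Y
    have := hC.hasFilteredColimits J _ hJ
    have := hF.preservesFiltered J _ hJ
    let E := (restrictToPresentables κ F hF).asEquivalence
    let Gpres := ObjectProperty.lift _ G hG
    -- `ι ⋙ F` and `restrictToPresentables κ F hF ⋙ ι` agree definitionally
    let e : (Gpres ⋙ E.inverse ⋙ ObjectProperty.ι _) ⋙ F ≅ G :=
      isoWhiskerLeft Gpres (isoWhiskerRight E.counitIso (ObjectProperty.ι _))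
    exact ⟨colimit _, ⟨IsColimit.coconePointsIsoOfNatIso
      (isColimitOfPreserves F (colimit.isColimit _)) hc e⟩⟩

end CategoryTheory.Functor

theorem stronglyAccessible_isEquivalence_of_restriction_general {C D : Type u} [Category.{v} C]
    [Category.{v} D] (κ : Cardinal.{v})
    (hC : IsAccessibleCat κ C) (hD : IsAccessibleCat κ D)
    (F : C ⥤ D) (hF : IsStronglyAccessible κ F)
    (hres : (restrictToPresentables κ F hF).IsEquivalence) :
    F.IsEquivalence := by
  obtain ⟨hFF⟩ := Functor.nonempty_fullyFaithful_of_restrictToPresentables hC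
    (.ofFullyFaithful (restrictToPresentables κ F hF))
  have := hFF.full
  have := hFF.faithful
  have := Functor.essSurj_of_restrictToPresentables hC hD (hF := hF)
  exact {}

/-- If a strongly `κ`-accessible functor between `κ`-accessible categories restricts
to an equivalence on `κ`-presentable objects, it is an equivalence. -/
theorem stronglyAccessible_isEquivalence_of_restriction {C D : Type u} [Category.{v} C]
    [Category.{v} D] (κ : Cardinal.{v}) (hκ : κ.IsRegular)
    (hC : IsAccessibleCat κ C) (hD : IsAccessibleCat κ D)
    (F : C ⥤ D) (hF : IsStronglyAccessible κ F)
    (hres : (restrictToPresentables κ F hF).IsEquivalence) :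
    F.IsEquivalence :=
  stronglyAccessible_isEquivalence_of_restriction_general κ hC hD F hF hres
end

section
/- Let C and D be κ-accessible categories for a regular cardinal κ. Restriction to κ-presentable objects and κ-ind-completion induce an equivalence between the groupoid of functors K_κ(C) → K_κ(D) with natural isomorphisms, and the groupoid of strongly κ-accessible functors C → D with natural isomorphisms. -/
open CategoryTheory CategoryTheory.Limits Opposite

universe v u

/-- The restriction functor from the full subcategory of strongly `κ`-accessible
functors `C ⥤ D` to functors between the subcategories of `κ`-presentable objects. -/
def restrictionFunctor (κ : Cardinal.{v}) (C D : Type u) [Category.{v} C]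
    [Category.{v} D] :
    ObjectProperty.FullSubcategory (fun F : C ⥤ D => IsStronglyAccessible κ F) ⥤
      (ObjectProperty.FullSubcategory (IsPresentableObj κ (C := C)) ⥤
        ObjectProperty.FullSubcategory (IsPresentableObj κ (C := D))) where
  obj F := ObjectProperty.lift _ (ObjectProperty.ι _ ⋙ F.obj)
    (fun X => F.property.preservesPresentable X.obj X.property)
  map {F G} η :=
    { app := fun X => ObjectProperty.homMk (η.hom.app X.obj)
      naturality := fun X Y f => by ext; exact η.hom.naturality f.hom }
  map_id _ := rfl
  map_comp _ _ := rfl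

/-!
Let `ι : K_κ(C) ⥤ C` be the inclusion. Write `X` as a `κ`-filtered colimit of presentables `pⱼ`.
A morphism from a presentable `A` to `X` factors through some `pⱼ`, and any two factorizations
agree at a later stage. So `j ↦ (pⱼ ⟶ X)` is final in the comma category `ι ↓ X`, and colimits
over `ι ↓ X` may be computed along the small `κ`-filtered diagram. Consequently:
a functor preserving `κ`-filtered colimits is the pointwise left Kan extension of its
restriction along `ι`, so restriction is fully faithful on such functors; and every
`H : K_κ(C) ⥤ K_κ(D)` has a pointwise left Kan extension along `ι`. This extension restricts
back to `H` because `ι` is fully faithful. It preserves `κ`-filtered colimits, again because maps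
out of presentables factor through a stage of such a colimit.
-/

/-- The paper's `K_κ(C)`. -/
abbrev presentables (κ : Cardinal.{v}) (C : Type u) [Category.{v} C] : ObjectProperty C :=
  IsPresentableObj κ

def HasCardFilteredColimits (κ : Cardinal.{v}) (C : Type u) [Category.{v} C] : Prop :=
  ∀ (J : Type v) (_ : SmallCategory J), IsCardFiltered κ J → HasColimitsOfShape J C

def PreservesCardFilteredColimits {C D : Type u} [Category.{v} C] [Category.{v} D]
    (κ : Cardinal.{v}) (F : C ⥤ D) : Prop :=
  ∀ (J : Type v) (_ : SmallCategory J), IsCardFiltered κ J → PreservesColimitsOfShape J F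

section Presentable

variable {C : Type u} [Category.{v} C] {κ : Cardinal.{v}}

theorem IsCardFiltered.isFiltered (hκ : Cardinal.aleph0 ≤ κ) {J : Type v} [SmallCategory J]
    (hJ : IsCardFiltered κ J) : IsFiltered J :=
  IsFiltered.of_cocone_nonempty.{v} _ fun F =>
    hJ _ _ ((Cardinal.lt_aleph0_of_finite _).trans_le hκ) F

theorem IsPresentableObj.of_iso {A B : C} (e : A ≅ B) (hA : IsPresentableObj κ A) :
    IsPresentableObj κ B := fun J _ hJ =>
  have := hA J _ hJ
  preservesColimitsOfShape_of_natIso (coyoneda.mapIso e.op).symm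

noncomputable def IsPresentableObj.isColimitMapCoconeCoyoneda {A : C} (hA : IsPresentableObj κ A)
    {J : Type v} [SmallCategory J] (hJ : IsCardFiltered κ J) {d : J ⥤ C} {t : Cocone d}
    (ht : IsColimit t) : IsColimit ((coyoneda.obj (op A)).mapCocone t) :=
  have := hA J _ hJ
  isColimitOfPreserves _ ht

theorem IsPresentableObj.exists_hom_comp_ι {A : C} (hA : IsPresentableObj κ A) {J : Type v}
    [SmallCategory J] (hJ : IsCardFiltered κ J) {d : J ⥤ C} {t : Cocone d} (ht : IsColimit t)
    (g : A ⟶ t.pt) : ∃ (i : J) (h : A ⟶ d.obj i), h ≫ t.ι.app i = g :=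
  have := hA J _ hJ
  exists_hom_of_preservesColimit_coyoneda ht g

theorem IsPresentableObj.exists_comp_map_eq {A : C} (hA : IsPresentableObj κ A)
    (hκ : Cardinal.aleph0 ≤ κ) {J : Type v} [SmallCategory J] (hJ : IsCardFiltered κ J)
    {d : J ⥤ C} {t : Cocone d} (ht : IsColimit t) {i : J} (h₁ h₂ : A ⟶ d.obj i)
    (e : h₁ ≫ t.ι.app i = h₂ ≫ t.ι.app i) : ∃ (j : J) (u : i ⟶ j), h₁ ≫ d.map u = h₂ ≫ d.map u :=
  have := hA J _ hJ
  have := hJ.isFiltered hκ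
  exists_eq_of_preservesColimit_coyoneda_self ht h₁ h₂ e

theorem IsAccessibleCat.exists_colimitOfShape (hC : IsAccessibleCat κ C) (X : C) :
    ∃ (J : Type v) (_ : SmallCategory J), IsCardFiltered κ J ∧
      Nonempty ((presentables κ C).ColimitOfShape J X) := by
  obtain ⟨J, _, F, c, hJ, hF, ⟨hc⟩, rfl⟩ := hC.gen X
  exact ⟨J, _, hJ, ⟨{ diag := F, ι := c.ι, isColimit := hc, prop_diag_obj := hF }⟩⟩

theorem final_toCostructuredArrow (hκ : Cardinal.aleph0 ≤ κ) {J : Type v} [SmallCategory J]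
    (hJ : IsCardFiltered κ J) {X : C} (p : (presentables κ C).ColimitOfShape J X) :
    p.toCostructuredArrow.Final := by
  have := hJ.isFiltered hκ
  refine Functor.final_of_exists_of_isFiltered _ (fun f => ?_) (fun {f j} g₁ g₂ => ?_)
  · obtain ⟨j, g, hg⟩ := f.left.property.exists_hom_comp_ι hJ p.isColimit f.hom
    exact ⟨j, ⟨CostructuredArrow.homMk (ObjectProperty.homMk g) hg⟩⟩
  · obtain ⟨k, a, h⟩ := f.left.property.exists_comp_map_eq hκ hJ p.isColimit g₁.left.hom
      g₂.left.hom ((CostructuredArrow.w g₁).trans (CostructuredArrow.w g₂).symm)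
    exact ⟨k, a, by cat_disch⟩

end Presentable

namespace CategoryTheory.Functor.LeftExtension

variable {C D : Type u} [Category.{v} C] [Category.{v} D] {κ : Cardinal.{v}}
  {G : (presentables κ C).FullSubcategory ⥤ D} {E : LeftExtension (presentables κ C).ι G}

section CardFilteredColimit

variable {J : Type v} [SmallCategory J] (hJ : IsCardFiltered κ J) {d : J ⥤ C} {t : Cocone d}
  (ht : IsColimit t) (s : Cocone (d ⋙ E.right))

/-- Sends `h ≫ t.ι.app i` to `E.hom.app A ≫ E.right.map h ≫ s.ι.app i`; this is well defined
because `Hom(A, -)` turns the `κ`-filtered colimit `t` into a colimit of types. -/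
noncomputable def descComponent (A : (presentables κ C).FullSubcategory) :
    (A.obj ⟶ t.pt) → (G.obj A ⟶ s.pt) :=
  (A.property.isColimitMapCoconeCoyoneda hJ ht).desc
    { pt := G.obj A ⟶ s.pt
      ι :=
        { app := fun i => TypeCat.ofHom fun h => E.hom.app A ≫ E.right.map h ≫ s.ι.app i
          naturality := fun i i' u => by
            ext h
            simp [← s.w u] } }

theorem descComponent_comp_ι (A : (presentables κ C).FullSubcategory) {i : J}
    (h : A.obj ⟶ d.obj i) :
    descComponent hJ ht s A (h ≫ t.ι.app i) = E.hom.app A ≫ E.right.map h ≫ s.ι.app i :=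
  ConcreteCategory.congr_hom ((A.property.isColimitMapCoconeCoyoneda hJ ht).fac _ i) h

noncomputable def costructuredArrowCocone :
    Cocone (CostructuredArrow.proj (presentables κ C).ι t.pt ⋙ G) where
  pt := s.pt
  ι :=
    { app := fun f => descComponent hJ ht s f.left f.hom
      naturality := fun f f' φ => by
        obtain ⟨i, h, hh⟩ := f'.left.property.exists_hom_comp_ι hJ ht f'.hom
        have hf : f.hom = (φ.left.hom ≫ h) ≫ t.ι.app i := by
          rw [Category.assoc, hh]
          exact (CostructuredArrow.w φ).symm
        change G.map φ.left ≫ descComponent hJ ht s f'.left f'.hom =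
          descComponent hJ ht s f.left f.hom ≫ 𝟙 _
        rw [Category.comp_id, hf, ← hh, descComponent_comp_ι, descComponent_comp_ι,
          Functor.map_comp_assoc]
        exact E.hom.naturality_assoc φ.left (E.right.map h ≫ s.ι.app i) }

noncomputable def coconeAtDesc (hX : IsColimit (E.coconeAt t.pt)) : E.right.obj t.pt ⟶ s.pt :=
  hX.desc (costructuredArrowCocone hJ ht s)

theorem map_comp_map_ι_comp_coconeAtDesc (hX : IsColimit (E.coconeAt t.pt))
    (A : (presentables κ C).FullSubcategory) {i : J} (h : A.obj ⟶ d.obj i) :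
    E.hom.app A ≫ E.right.map h ≫ E.right.map (t.ι.app i) ≫ coconeAtDesc hJ ht s hX =
      E.hom.app A ≫ E.right.map h ≫ s.ι.app i := by
  rw [← Functor.map_comp_assoc]
  exact (Category.assoc _ _ _).symm.trans
    ((hX.fac (costructuredArrowCocone hJ ht s) (CostructuredArrow.mk (h ≫ t.ι.app i))).trans
      (descComponent_comp_ι hJ ht s A h))

noncomputable def IsPointwiseLeftKanExtension.isColimitMapCocone
    (hE : E.IsPointwiseLeftKanExtension) : IsColimit (E.right.mapCocone t) where
  desc s := coconeAtDesc hJ ht s (hE t.pt)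
  fac s i := (hE (d.obj i)).hom_ext' fun A h =>
    map_comp_map_ι_comp_coconeAtDesc hJ ht s (hE t.pt) A h
  uniq s m hm := (hE t.pt).hom_ext' fun A φ => by
    obtain ⟨i, h, rfl⟩ := A.property.exists_hom_comp_ι hJ ht φ
    rw [Functor.map_comp, Category.assoc, Category.assoc,
      map_comp_map_ι_comp_coconeAtDesc hJ ht s (hE t.pt) A h]
    exact congrArg _ (congrArg _ (hm i))

end CardFilteredColimit

theorem IsPointwiseLeftKanExtension.preservesCardFilteredColimits
    (hE : E.IsPointwiseLeftKanExtension) : PreservesCardFilteredColimits κ E.right :=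
  fun _ _ hJ => ⟨fun {_} => ⟨fun {_} ht => ⟨hE.isColimitMapCocone hJ ht⟩⟩⟩

theorem IsPointwiseLeftKanExtension.isStronglyAccessible
    {H : (presentables κ C).FullSubcategory ⥤ (presentables κ D).FullSubcategory}
    {E : LeftExtension (presentables κ C).ι (H ⋙ (presentables κ D).ι)}
    (hE : E.IsPointwiseLeftKanExtension) : IsStronglyAccessible κ E.right where
  preservesFiltered := hE.preservesCardFilteredColimits
  preservesPresentable A hA :=
    have := hE.isIso_hom
    (H.obj ⟨A, hA⟩).property.of_iso (asIso (E.hom.app ⟨A, hA⟩))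

end CategoryTheory.Functor.LeftExtension

section Restriction

open Functor

variable {C D : Type u} [Category.{v} C] [Category.{v} D] {κ : Cardinal.{v}}

theorem hasPointwiseLeftKanExtension_ι (hκ : Cardinal.aleph0 ≤ κ) (hC : IsAccessibleCat κ C)
    (hD : HasCardFilteredColimits κ D) (G : (presentables κ C).FullSubcategory ⥤ D) :
    (presentables κ C).ι.HasPointwiseLeftKanExtension G := fun X => by
  obtain ⟨J, _, hJ, ⟨p⟩⟩ := hC.exists_colimitOfShape X
  have := final_toCostructuredArrow hκ hJ p
  have := hD J _ hJ
  exact Functor.Final.hasColimit_of_comp p.toCostructuredArrow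

theorem isLeftKanExtension_of_preservesCardFilteredColimits (hκ : Cardinal.aleph0 ≤ κ)
    (hC : IsAccessibleCat κ C) {F : C ⥤ D} (hF : PreservesCardFilteredColimits κ F) :
    F.IsLeftKanExtension (𝟙 ((presentables κ C).ι ⋙ F)) := by
  have h (X : C) : Nonempty
      ((LeftExtension.mk F (𝟙 ((presentables κ C).ι ⋙ F))).IsPointwiseLeftKanExtensionAt X) := by
    obtain ⟨J, _, hJ, ⟨p⟩⟩ := hC.exists_colimitOfShape X
    have := final_toCostructuredArrow hκ hJ p
    have := hF J _ hJ
    refine ⟨(Functor.Final.isColimitWhiskerEquiv p.toCostructuredArrow _).1 ?_⟩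
    exact IsColimit.ofIsoColimit (isColimitOfPreserves F p.isColimit)
      (Cocone.ext (Iso.refl _) fun j => (Category.comp_id _).trans (Category.id_comp _).symm)
  exact LeftExtension.IsPointwiseLeftKanExtension.isLeftKanExtension fun X => (h X).some

theorem restrictionFunctor_faithful (hκ : Cardinal.aleph0 ≤ κ) (hC : IsAccessibleCat κ C) :
    (restrictionFunctor κ C D).Faithful where
  map_injective {F G} η₁ η₂ h := by
    have :=
      isLeftKanExtension_of_preservesCardFilteredColimits hκ hC F.property.preservesFiltered
    ext1
    refine F.obj.hom_ext_of_isLeftKanExtension (𝟙 ((presentables κ C).ι ⋙ F.obj)) _ _ ?_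
    ext A
    simpa [restrictionFunctor] using congr_arg InducedCategory.Hom.hom (NatTrans.congr_app h A)

theorem restrictionFunctor_full (hκ : Cardinal.aleph0 ≤ κ) (hC : IsAccessibleCat κ C) :
    (restrictionFunctor κ C D).Full where
  map_surjective {F G} φ := by
    have :=
      isLeftKanExtension_of_preservesCardFilteredColimits hκ hC F.property.preservesFiltered
    refine ⟨ObjectProperty.homMk (F.obj.descOfIsLeftKanExtension (𝟙 _) G.obj
      (whiskerRight φ (presentables κ D).ι)), ?_⟩
    ext A
    have h := F.obj.descOfIsLeftKanExtension_fac_app (𝟙 _) G.obj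
      (whiskerRight φ (presentables κ D).ι) A
    simp only [NatTrans.id_app, Category.id_comp] at h
    exact h

theorem restrictionFunctor_essSurj (hκ : Cardinal.aleph0 ≤ κ) (hC : IsAccessibleCat κ C)
    (hD : HasCardFilteredColimits κ D) : (restrictionFunctor κ C D).EssSurj where
  mem_essImage H := by
    have := hasPointwiseLeftKanExtension_ι hκ hC hD (H ⋙ (presentables κ D).ι)
    let E := LeftExtension.mk _
      ((presentables κ C).ι.pointwiseLeftKanExtensionUnit (H ⋙ (presentables κ D).ι))
    have hE : E.IsPointwiseLeftKanExtension :=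
      pointwiseLeftKanExtensionIsPointwiseLeftKanExtension _ _
    have := hE.isIso_hom
    let u := asIso E.hom
    exact ⟨⟨_, hE.isStronglyAccessible⟩,
      ⟨NatIso.ofComponents (fun A => ObjectProperty.isoMk _ (u.app A).symm)
        fun f => by ext; exact u.inv.naturality f⟩⟩

end Restriction

/-- Restriction to `κ`-presentable objects induces an equivalence between the groupoid of
strongly `κ`-accessible functors `C ⥤ D` (with natural isomorphisms) and the groupoid of
functors `K_κ(C) ⥤ K_κ(D)` (with natural isomorphisms); the inverse is given by
`κ`-ind-completion. -/
theorem restriction_core_equivalence {C D : Type u} [Category.{v} C] [Category.{v} D]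
    (κ : Cardinal.{v}) (hκ : κ.IsRegular)
    (hC : IsAccessibleCat κ C) (hD : IsAccessibleCat κ D) :
    (Core.functorToCore (Core.inclusion
        (ObjectProperty.FullSubcategory (fun F : C ⥤ D => IsStronglyAccessible κ F)) ⋙
      restrictionFunctor κ C D)).IsEquivalence := by
  have : (restrictionFunctor κ C D).IsEquivalence :=
    { faithful := restrictionFunctor_faithful hκ.aleph0_le hC
      full := restrictionFunctor_full hκ.aleph0_le hC
      essSurj := restrictionFunctor_essSurj hκ.aleph0_le hC hD.hasFilteredColimits }
  exact (restrictionFunctor κ C D).asEquivalence.core.isEquivalence_functor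
end

section
/- If F : C → D is a relative functor between relative categories admitting a relative functor G : D → C together with natural transformations η : id_C → G ∘ F and ε : F ∘ G → id_D whose components are weak equivalences, then the induced functor on homotopy categories Ho(C) → Ho(D) (localizations at the weak equivalences) is an equivalence of categories. -/
/-!
Since their components are weak equivalences, `η` and `ε` become natural isomorphisms after
composing with the localization functors. As `Ho(F)` and `Ho(G)` lift `F ⋙ Q` and `G ⋙ Q`, this
gives isomorphisms `(F ⋙ Q) ⋙ Ho(G) ≅ Q` and `(G ⋙ Q) ⋙ Ho(F) ≅ Q`, which the universal property
of the localization lifts to `Ho(F) ⋙ Ho(G) ≅ 𝟭` and `Ho(G) ⋙ Ho(F) ≅ 𝟭`.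
-/

open CategoryTheory

/-- A relative category structure on a category: a wide subcategory of weak
equivalences. -/
structure RelCatStr (C : Type u) [Category.{v} C] where
  W : MorphismProperty C
  id_mem : ∀ X : C, W (𝟙 X)
  comp_mem : ∀ {X Y Z : C} (f : X ⟶ Y) (g : Y ⟶ Z), W f → W g → W (f ≫ g)

namespace CategoryTheory

variable {C D E HC HD : Type*} [Category* C] [Category* D] [Category* E]
  [Category* HC] [Category* HD]

noncomputable def MorphismProperty.IsInvertedBy.whiskerRightIso {W : MorphismProperty C}
    {L : C ⥤ HC} (hL : W.IsInvertedBy L) {F₁ F₂ : E ⥤ C} (τ : F₁ ⟶ F₂)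
    (hτ : ∀ X, W (τ.app X)) : F₁ ⋙ L ≅ F₂ ⋙ L :=
  haveI : ∀ X, IsIso ((Functor.whiskerRight τ L).app X) := fun X => hL _ (hτ X)
  haveI := NatIso.isIso_of_isIso_app (Functor.whiskerRight τ L)
  asIso (Functor.whiskerRight τ L)

namespace Localization

variable (LC : C ⥤ HC) (WC : MorphismProperty C) (LD : D ⥤ HD) (WD : MorphismProperty D)

noncomputable def liftCompIso {F : C ⥤ D} {G : D ⥤ C} (G' : HD ⥤ HC)
    [Lifting LD WD (G ⋙ LC) G'] (e : (F ⋙ G) ⋙ LC ≅ LC) : (F ⋙ LD) ⋙ G' ≅ LC :=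
  Functor.associator _ _ _ ≪≫ Functor.isoWhiskerLeft F (Lifting.iso LD WD (G ⋙ LC) G') ≪≫
    (Functor.associator _ _ _).symm ≪≫ e

theorem isEquivalence_of_unit_counit_mem [LC.IsLocalization WC] [LD.IsLocalization WD]
    {F : C ⥤ D} {G : D ⥤ C}
    (η : 𝟭 C ⟶ F ⋙ G) (hη : ∀ X, WC (η.app X)) (ε : G ⋙ F ⟶ 𝟭 D) (hε : ∀ X, WD (ε.app X))
    (F' : HC ⥤ HD) (G' : HD ⥤ HC) [Lifting LC WC (F ⋙ LD) F'] [Lifting LD WD (G ⋙ LC) G'] :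
    F'.IsEquivalence :=
  Localization.isEquivalence LC WC LD WD (F ⋙ LD) F' (G ⋙ LC) G'
    (liftCompIso LC LD WD G' ((inverts LC WC).whiskerRightIso η hη).symm)
    (liftCompIso LD LC WC F' ((inverts LD WD).whiskerRightIso ε hε))

end Localization

end CategoryTheory

/-- If a relative functor `F` admits a relative functor `G` together with natural
transformations `η : id ⟶ G ∘ F` and `ε : F ∘ G ⟶ id` whose components are weak
equivalences, then the induced functor on homotopy categories (localizations at the weak
equivalences) is an equivalence. -/
theorem homotopy_equivalence_induces_equivalence_of_localizations
    {C : Type u} {D : Type u} [Category.{v} C] [Category.{v} D]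
    (RC : RelCatStr C) (RD : RelCatStr D)
    (F : C ⥤ D) (hF : ∀ {X Y : C} (f : X ⟶ Y), RC.W f → RD.W (F.map f))
    (G : D ⥤ C) (hG : ∀ {X Y : D} (f : X ⟶ Y), RD.W f → RC.W (G.map f))
    (η : 𝟭 C ⟶ F ⋙ G) (hη : ∀ X : C, RC.W (η.app X))
    (ε : G ⋙ F ⟶ 𝟭 D) (hε : ∀ X : D, RD.W (ε.app X)) :
    (Localization.Construction.lift (F ⋙ RD.W.Q)
      (fun _ _ f hf => RD.W.Q_inverts _ (hF f hf))).IsEquivalence := by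
  -- typed as `IsInvertedBy` so that instance search finds `Lifting` for `Construction.lift`
  have hFQ : RC.W.IsInvertedBy (F ⋙ RD.W.Q) := fun _ _ f hf => RD.W.Q_inverts _ (hF f hf)
  have hGQ : RD.W.IsInvertedBy (G ⋙ RC.W.Q) := fun _ _ f hf => RC.W.Q_inverts _ (hG f hf)
  exact Localization.isEquivalence_of_unit_counit_mem RC.W.Q RC.W RD.W.Q RD.W η hη ε hε
    (Localization.Construction.lift _ hFQ) (Localization.Construction.lift _ hGQ)
end
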